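/- Let F : M_n(ℂ) → M_m(ℂ) be a UCP map, and let σ ∈ M_n(ℂ), ρ ∈ M_m(ℂ) be positive definite density matrices with tr(ρF(B)) = tr(σB) for all B ∈ M_n(ℂ). Then the following are equivalent: (a) there exists a UCP map G : M_m(ℂ) → M_n(ℂ) such that tr(σ·G(A)·B) = tr(ρ·A·F(B)) for all A ∈ M_m(ℂ) and B ∈ M_n(ℂ) (a Bayesian inverse of (F, ω)); (b) F(σB)ρ = ρF(Bσ) for all B ∈ M_n(ℂ). Moreover, when a Bayesian inverse exists it is unique: any two maps G, G' : M_m(ℂ) → M_n(ℂ) satisfying the condition in (a) are equal. -/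

import Mathlib

/-!
Let `F*` be the adjoint of `F` for the trace pairing, `tr (F* X * B) = tr (X * F B)`. The Bayes
condition for `G` says exactly `σ * G A = F* (ρ * A)`, so `G` is determined by it because `σ` is
invertible. Completely positive maps commute with `ᴴ`, so a Bayesian inverse also satisfies
`G A * σ = F* (A * ρ)`, and hence `F* (ρ * A) * σ = σ * G A * σ = σ * F* (A * ρ)`; by duality this
is condition (b). Conversely, if (b) holds then `F*` intertwines `ρ` with `σ`. Diagonalising `ρ`
and `σ` shows that it then also intertwines `ρ^{1/2}` with `σ^{1/2}`, and this makes
`G A = σ^{-1/2} F* (ρ^{1/2} A ρ^{1/2}) σ^{-1/2}` a Bayesian inverse. It is completely positive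
because it is a composite of completely positive maps, and it is unital because `F* ρ = σ`.
-/

open Matrix ComplexOrder

/-- The `k`-th amplification `id_{M_k(ℂ)} ⊗ Φ` of a map `Φ` between matrix algebras. -/
def amplify {n m : Type*} (Φ : Matrix n n ℂ → Matrix m m ℂ) (k : ℕ)
    (M : Matrix (Fin k × n) (Fin k × n) ℂ) : Matrix (Fin k × m) (Fin k × m) ℂ :=
  Matrix.of fun p q => Φ (Matrix.of fun a b => M (p.1, a) (q.1, b)) p.2 q.2

/-- Complete positivity: all amplifications preserve positive semidefiniteness. -/
def IsCP {n m : Type*} [Fintype n] [Fintype m] (Φ : Matrix n n ℂ → Matrix m m ℂ) : Prop :=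
  ∀ (k : ℕ) (M : Matrix (Fin k × n) (Fin k × n) ℂ), M.PosSemidef → (amplify Φ k M).PosSemidef

open scoped Kronecker

variable {p q : Type*} [Fintype p] [Fintype q]

namespace Matrix

theorem posSemidef_iff_forall_dotProduct_mulVec_nonneg [DecidableEq p] {M : Matrix p p ℂ} :
    M.PosSemidef ↔ ∀ x : p → ℂ, 0 ≤ star x ⬝ᵥ M *ᵥ x := by
  have hstar : ∀ x : p → ℂ, x ⬝ᵥ star (M *ᵥ x) = star (star x ⬝ᵥ M *ᵥ x) := fun x => by
    rw [star_dotProduct, star_star, dotProduct_comm]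
  have hreal : ∀ z : ℂ, ((RCLike.re (star z) : ℂ) = star z ∧ 0 ≤ RCLike.re (star z)) ↔ 0 ≤ z := by
    intro z
    rw [Complex.nonneg_iff, Complex.ext_iff]
    simp only [RCLike.star_def, RCLike.re_to_complex, Complex.ofReal_re, Complex.conj_re,
      Complex.ofReal_im, Complex.conj_im]
    grind
  rw [← isPositive_toEuclideanLin_iff, LinearMap.isPositive_iff_complex]
  simp only [EuclideanSpace.inner_eq_star_dotProduct, toLpLin_apply, hstar, hreal]
  exact ⟨fun h x => h (WithLp.toLp 2 x), fun h x => h x.ofLp⟩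

open scoped MatrixOrder in
theorem PosSemidef.trace_mul_nonneg {𝕜 : Type*} [RCLike 𝕜] [DecidableEq p] {A B : Matrix p p 𝕜}
    (hA : A.PosSemidef) (hB : B.PosSemidef) : 0 ≤ (A * B).trace := by
  obtain ⟨C, rfl⟩ := CStarAlgebra.nonneg_iff_eq_star_mul_self.mp hA.nonneg
  rw [mul_assoc, trace_mul_comm]
  exact (hB.mul_mul_conjTranspose_same C).trace_nonneg

theorem trace_mul_eq_sum_trace_blocks {ι R : Type*} [Fintype ι] [NonUnitalNonAssocSemiring R]
    (P : Matrix (ι × q) (ι × p) R) (Q : Matrix (ι × p) (ι × q) R) :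
    (P * Q).trace =
      ∑ a, ∑ b, ((of fun i j => P (a, i) (b, j)) * of fun i j => Q (b, i) (a, j)).trace := by
  simp only [trace, diag, mul_apply, of_apply, Fintype.sum_prod_type]
  exact Finset.sum_congr rfl fun a _ => Finset.sum_comm

theorem diagonal_mul_single {R : Type*} [Semiring R] [DecidableEq p] (v : p → R) (i j : p)
    (c : R) : diagonal v * single i j c = v i • single i j c := by
  ext a b
  by_cases h : i = a ∧ j = b
  · obtain ⟨rfl, rfl⟩ := h
    simp
  · simp [single_apply_of_ne _ _ _ _ _ h]

theorem single_mul_diagonal {R : Type*} [CommSemiring R] [DecidableEq p] (v : p → R) (i j : p)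
    (c : R) : single i j c * diagonal v = v j • single i j c := by
  ext a b
  by_cases h : i = a ∧ j = b
  · obtain ⟨rfl, rfl⟩ := h
    simp [mul_comm]
  · simp [single_apply_of_ne _ _ _ _ _ h]

open scoped MatrixOrder in
theorem PosSemidef.sqrt_eq {𝕜 : Type*} [RCLike 𝕜] [DecidableEq p] {A : Matrix p p 𝕜}
    (hA : A.PosSemidef) :
    CFC.sqrt A = Unitary.conjStarAlgAut 𝕜 _ hA.1.eigenvectorUnitary
      (diagonal (RCLike.ofReal ∘ Real.sqrt ∘ hA.1.eigenvalues)) := by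
  have hsqrt : (fun x : ℝ => (NNReal.sqrt x.toNNReal : ℝ)) = Real.sqrt :=
    funext fun x => by rw [Real.sqrt]
  rw [CFC.sqrt_eq_cfc, cfc_nnreal_eq_real _ A hA.nonneg, hA.1.cfc_eq, IsHermitian.cfc, hsqrt]

end Matrix

theorem IsCP.comp {r : Type*} [Fintype r] {Φ : Matrix q q ℂ → Matrix r r ℂ}
    {Ψ : Matrix p p ℂ → Matrix q q ℂ} (hΦ : IsCP Φ) (hΨ : IsCP Ψ) : IsCP (Φ ∘ Ψ) :=
  fun k M hM => hΦ k _ (hΨ k M hM)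

omit [Fintype q] in
theorem amplify_conjTranspose_mul_mul (S : Matrix p q ℂ) (k : ℕ)
    (M : Matrix (Fin k × p) (Fin k × p) ℂ) :
    amplify (fun A : Matrix p p ℂ => Sᴴ * A * S) k M =
      ((1 : Matrix (Fin k) (Fin k) ℂ) ⊗ₖ S)ᴴ * M * ((1 : Matrix (Fin k) (Fin k) ℂ) ⊗ₖ S) := by
  ext ⟨a, i⟩ ⟨b, j⟩
  simp only [amplify, of_apply, mul_apply, conjTranspose_apply, kronecker_apply, one_apply,
    Fintype.sum_prod_type, Finset.sum_mul]
  simp [apply_ite star, ite_mul, mul_ite, Finset.sum_ite_irrel]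

theorem isCP_conjTranspose_mul_mul (S : Matrix p q ℂ) :
    IsCP (fun A : Matrix p p ℂ => Sᴴ * A * S) := by
  intro k M hM
  rw [amplify_conjTranspose_mul_mul]
  exact hM.conjTranspose_mul_mul_same _

theorem IsCP.map_conjTranspose {Φ : Matrix p p ℂ → Matrix q q ℂ} (hΦ : IsCP Φ)
    (X : Matrix p p ℂ) : Φ Xᴴ = (Φ X)ᴴ := by
  classical
  -- The blocks of `Cᴴ * C` are `1, X` in the first block row and `Xᴴ, Xᴴ * X` in the second.
  let C : Matrix p (Fin 2 × p) ℂ := of fun r u => ![1, X] u.1 r u.2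
  have hblock : ∀ a b, (of fun i j => (Cᴴ * C) (a, i) (b, j)) = (![1, X] a)ᴴ * ![1, X] b := by
    intro a b
    ext i j
    simp [C, mul_apply]
  ext i j
  have h := congrFun (congrFun (hΦ 2 _ (posSemidef_conjTranspose_mul_self C)).1 (1, i)) (0, j)
  simp only [amplify, conjTranspose_apply, of_apply, hblock] at h
  simpa using h.symm

section traceDual

variable {R : Type*} [CommSemiring R] [DecidableEq p]

/-- The adjoint of `F` for the trace pairing `(X, B) ↦ (X * B).trace`. -/
noncomputable def traceDual (F : Matrix p p R →ₗ[R] Matrix q q R) :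
    Matrix q q R →ₗ[R] Matrix p p R where
  toFun X := of fun i j => (X * F (single j i 1)).trace
  map_add' X Y := by ext; simp [add_mul]
  map_smul' c X := by ext; simp

theorem trace_traceDual_mul (F : Matrix p p R →ₗ[R] Matrix q q R) (X : Matrix q q R)
    (B : Matrix p p R) : (traceDual F X * B).trace = (X * F B).trace := by
  have hB : B = ∑ i, ∑ j, B i j • single i j 1 := by
    simpa [smul_single] using matrix_eq_sum_single B
  rw [hB]
  simp only [map_sum, map_smul, Matrix.mul_sum, Matrix.mul_smul, trace_sum, trace_smul,
    trace_mul_single]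
  simp [traceDual]

theorem traceDual_conjTranspose [StarRing R] {F : Matrix p p R →ₗ[R] Matrix q q R}
    (hF : ∀ X, F Xᴴ = (F X)ᴴ) (Y : Matrix q q R) : traceDual F Yᴴ = (traceDual F Y)ᴴ := by
  rw [ext_iff_trace_mul_right]
  intro B
  calc (traceDual F Yᴴ * B).trace = star (((F B)ᴴ * Y).trace) := by
        rw [trace_traceDual_mul, ← trace_conjTranspose, conjTranspose_mul,
          conjTranspose_conjTranspose]
    _ = star ((traceDual F Y * Bᴴ).trace) := by
        rw [trace_mul_comm, ← hF, trace_traceDual_mul]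
    _ = ((traceDual F Y)ᴴ * B).trace := by
        rw [← trace_conjTranspose, conjTranspose_mul, conjTranspose_conjTranspose, trace_mul_comm]

end traceDual

theorem trace_amplify_traceDual_mul [DecidableEq p] (F : Matrix p p ℂ →ₗ[ℂ] Matrix q q ℂ)
    (k : ℕ) (X : Matrix (Fin k × q) (Fin k × q) ℂ) (M : Matrix (Fin k × p) (Fin k × p) ℂ) :
    (amplify (traceDual F) k X * M).trace = (X * amplify F k M).trace := by
  rw [trace_mul_eq_sum_trace_blocks, trace_mul_eq_sum_trace_blocks]
  refine Finset.sum_congr rfl fun a _ => Finset.sum_congr rfl fun b _ => ?_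
  exact trace_traceDual_mul F (of fun i j => X (a, i) (b, j)) (of fun i j => M (b, i) (a, j))

theorem IsCP.traceDual [DecidableEq p] {F : Matrix p p ℂ →ₗ[ℂ] Matrix q q ℂ} (hF : IsCP F) :
    IsCP (traceDual F) := by
  classical
  intro k X hX
  rw [posSemidef_iff_forall_dotProduct_mulVec_nonneg]
  intro y
  rw [← dotProduct_comm, ← trace_vecMulVec, ← mul_vecMulVec, trace_amplify_traceDual_mul]
  exact hX.trace_mul_nonneg (hF k _ (posSemidef_vecMulVec_self_star y))

/-- For invertible `a` and `b` this says `Φ (a * x * a⁻¹) = b * Φ x * b⁻¹`; condition (b) of the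
theorem is `Intertwines F σ ρ`. -/
def Intertwines {R S : Type*} [Mul R] [Mul S] (Φ : R → S) (a : R) (b : S) : Prop :=
  ∀ x, Φ (a * x) * b = b * Φ (x * a)

theorem Intertwines.comp_comp {R R' S S' F G : Type*} [Mul R] [Mul R'] [Mul S] [Mul S']
    [FunLike F R' R] [MulHomClass F R' R] [FunLike G S S'] [MulHomClass G S S']
    {Φ : R → S} {a : R} {b : S} (h : Intertwines Φ a b) (e : F) (g : G) {a' : R'}
    (ha : e a' = a) : Intertwines (g ∘ Φ ∘ e) a' (g b) := by
  intro x
  simp only [Function.comp_apply, map_mul, ha]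
  rw [← map_mul, h, map_mul]

theorem Complex.ofReal_sqrt_mul_sqrt_mul_eq_of_mul_mul_eq {a b c d : ℝ} {x : ℂ} (ha : 0 ≤ a)
    (hc : 0 ≤ c) (h : a * b * x = c * d * x) : (√a * √b : ℝ) * x = (√c * √d : ℝ) * x := by
  rcases eq_or_ne x 0 with rfl | hx
  · simp
  have hac : a * b = c * d := by exact_mod_cast mul_right_cancel₀ hx h
  rw [← Real.sqrt_mul ha, ← Real.sqrt_mul hc, hac]

section Intertwines

variable [DecidableEq p] [DecidableEq q]

theorem intertwines_diagonal_sqrt (Ψ : Matrix p p ℂ →ₗ[ℂ] Matrix q q ℂ) {d : p → ℝ} {e : q → ℝ}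
    (hd : 0 ≤ d)
    (h : Intertwines Ψ (diagonal (RCLike.ofReal ∘ d)) (diagonal (RCLike.ofReal ∘ e))) :
    Intertwines Ψ (diagonal (RCLike.ofReal ∘ Real.sqrt ∘ d))
      (diagonal (RCLike.ofReal ∘ Real.sqrt ∘ e)) := by
  intro A
  induction A using Matrix.induction_on' with
  | h_zero => simp
  | h_add B C hB hC => simp only [mul_add, add_mul, map_add, hB, hC]
  | h_std_basis i j c =>
    have hij := h (single i j c)
    simp only [diagonal_mul_single, single_mul_diagonal, map_smul, smul_mul_assoc,
      mul_smul_comm] at hij ⊢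
    ext a b
    have hab := congrFun (congrFun hij a) b
    simp only [Matrix.smul_apply, mul_diagonal, diagonal_mul, Function.comp_apply,
      smul_eq_mul] at hab ⊢
    -- Either the entry vanishes or `d i * e b = d j * e a`, which survives taking square roots.
    have key := Complex.ofReal_sqrt_mul_sqrt_mul_eq_of_mul_mul_eq (x := Ψ (single i j c) a b)
      (b := e b) (d := e a) (hd i) (hd j) (by linear_combination hab)
    push_cast at key
    linear_combination key

open scoped MatrixOrder in
theorem Intertwines.sqrt {Φ : Matrix p p ℂ →ₗ[ℂ] Matrix q q ℂ} {ρ : Matrix p p ℂ}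
    {σ : Matrix q q ℂ} (hρ : ρ.PosSemidef) (hσ : σ.PosSemidef) (h : Intertwines Φ ρ σ) :
    Intertwines Φ (CFC.sqrt ρ) (CFC.sqrt σ) := by
  set eU := Unitary.conjStarAlgAut ℂ _ hρ.1.eigenvectorUnitary
  set eV := Unitary.conjStarAlgAut ℂ _ hσ.1.eigenvectorUnitary
  let Ψ : Matrix p p ℂ →ₗ[ℂ] Matrix q q ℂ :=
    eV.symm.toAlgEquiv.toLinearMap ∘ₗ Φ ∘ₗ eU.toAlgEquiv.toLinearMap
  have hΨ : Intertwines Ψ (diagonal (RCLike.ofReal ∘ hρ.1.eigenvalues))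
      (diagonal (RCLike.ofReal ∘ hσ.1.eigenvalues)) := by
    have hσ' : eV.symm σ = diagonal (RCLike.ofReal ∘ hσ.1.eigenvalues) := by
      rw [StarAlgEquiv.symm_apply_eq]
      exact hσ.1.spectral_theorem
    have := h.comp_comp eU eV.symm hρ.1.spectral_theorem.symm
    rwa [hσ'] at this
  have hΨsqrt := (intertwines_diagonal_sqrt Ψ (fun i => hρ.eigenvalues_nonneg i) hΨ).comp_comp
    eU.symm eV (eU.symm_apply_apply _)
  have hΦ : ⇑eV ∘ ⇑Ψ ∘ ⇑eU.symm = Φ := funext fun A => by simp [Ψ]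
  rwa [hΦ, ← hρ.sqrt_eq, ← hσ.sqrt_eq] at hΨsqrt

end Intertwines

section Bayes

variable {R : Type*} [CommSemiring R] [DecidableEq p]

theorem intertwines_traceDual_iff (F : Matrix p p R →ₗ[R] Matrix q q R) (σ : Matrix p p R)
    (ρ : Matrix q q R) : Intertwines (traceDual F) ρ σ ↔ Intertwines F σ ρ := by
  have hleft : ∀ A B, (traceDual F (ρ * A) * σ * B).trace = (A * (F (σ * B) * ρ)).trace :=
    fun A B => by rw [mul_assoc, trace_traceDual_mul, mul_assoc, trace_mul_comm, mul_assoc]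
  have hright : ∀ A B, (σ * traceDual F (A * ρ) * B).trace = (A * (ρ * F (B * σ))).trace :=
    fun A B => by
      rw [mul_assoc, trace_mul_comm, mul_assoc, trace_traceDual_mul, mul_assoc]
  simp only [Intertwines, ext_iff_trace_mul_right (A := traceDual F _ * σ), hleft, hright]
  rw [forall_comm]
  simp only [← ext_iff_trace_mul_left]

theorem bayes_condition_iff_mul_eq_traceDual (F : Matrix p p R →ₗ[R] Matrix q q R)
    (G : Matrix q q R → Matrix p p R) (σ : Matrix p p R) (ρ : Matrix q q R) :
    (∀ A B, (σ * G A * B).trace = (ρ * A * F B).trace) ↔ ∀ A, σ * G A = traceDual F (ρ * A) := by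
  refine forall_congr' fun A => ?_
  rw [ext_iff_trace_mul_right]
  simp only [trace_traceDual_mul]

theorem intertwines_of_bayes [StarRing R] {F : Matrix p p R →ₗ[R] Matrix q q R}
    {G : Matrix q q R → Matrix p p R} {σ : Matrix p p R} {ρ : Matrix q q R}
    (hF : ∀ X, F Xᴴ = (F X)ᴴ) (hG : ∀ X, G Xᴴ = (G X)ᴴ) (hσ : σ.IsHermitian)
    (hρ : ρ.IsHermitian) (hbayes : ∀ A, σ * G A = traceDual F (ρ * A)) :
    Intertwines F σ ρ := by
  rw [← intertwines_traceDual_iff]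
  intro A
  have hbayes' : G A * σ = traceDual F (A * ρ) := by
    calc G A * σ = (σ * G Aᴴ)ᴴ := by
          rw [conjTranspose_mul, hG, conjTranspose_conjTranspose, hσ.eq]
      _ = traceDual F (A * ρ) := by
          rw [hbayes, ← traceDual_conjTranspose hF, conjTranspose_mul,
            conjTranspose_conjTranspose, hρ.eq]
  rw [← hbayes, ← hbayes', mul_assoc]

end Bayes

open scoped MatrixOrder in
theorem exists_bayes_of_intertwines [DecidableEq p] [DecidableEq q]
    {F : Matrix p p ℂ →ₗ[ℂ] Matrix q q ℂ} (hF : IsCP F) {σ : Matrix p p ℂ} {ρ : Matrix q q ℂ}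
    (hσ : σ.PosDef) (hρ : ρ.PosSemidef) (hpres : traceDual F ρ = σ) (h : Intertwines F σ ρ) :
    ∃ G : Matrix q q ℂ →ₗ[ℂ] Matrix p p ℂ,
      IsCP G ∧ G 1 = 1 ∧ ∀ A, σ * G A = traceDual F (ρ * A) := by
  have hsqrt := ((intertwines_traceDual_iff F σ ρ).2 h).sqrt hρ hσ.posSemidef
  set S := CFC.sqrt ρ
  set R := CFC.sqrt σ
  have hSS : S * S = ρ := CFC.sqrt_mul_sqrt_self ρ hρ.nonneg
  have hRR : R * R = σ := CFC.sqrt_mul_sqrt_self σ hσ.posSemidef.nonneg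
  have hS : S.IsHermitian := (CFC.sqrt_nonneg ρ).posSemidef.1
  have hR : R.IsHermitian := (CFC.sqrt_nonneg σ).posSemidef.1
  have hRdet : IsUnit R.det :=
    (isUnit_iff_isUnit_det R).mp (isUnit_of_mul_isUnit_left (hRR ▸ hσ.isUnit))
  have hRT : R * R⁻¹ = 1 := mul_nonsing_inv R hRdet
  have hTR : R⁻¹ * R = 1 := nonsing_inv_mul R hRdet
  let G := LinearMap.mulLeftRight ℂ (R⁻¹, R⁻¹) ∘ₗ traceDual F ∘ₗ LinearMap.mulLeftRight ℂ (S, S)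
  have hG : ∀ A, G A = R⁻¹ * traceDual F (S * A * S) * R⁻¹ := fun A => rfl
  refine ⟨G, ?_, ?_, fun A => ?_⟩
  · have hGcomp : ⇑G = (fun X => (R⁻¹)ᴴ * X * R⁻¹) ∘ traceDual F ∘ fun A => Sᴴ * A * S := by
      funext A
      simp [hG, hS.eq, hR.inv.eq]
    rw [hGcomp]
    exact (isCP_conjTranspose_mul_mul _).comp (hF.traceDual.comp (isCP_conjTranspose_mul_mul _))
  · rw [hG, mul_one, hSS, hpres, ← hRR, ← mul_assoc, hTR, one_mul, hRT]
  · calc σ * G A = R * (R * R⁻¹) * (traceDual F (S * A * S) * R⁻¹) := by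
          rw [hG, ← hRR]
          simp only [mul_assoc]
      _ = traceDual F (S * (S * A)) * R * R⁻¹ := by
          rw [hRT, mul_one, ← mul_assoc, ← hsqrt]
      _ = traceDual F (ρ * A) := by rw [mul_assoc, hRT, mul_one, ← mul_assoc, hSS]

theorem stmt_8_general (n m : ℕ)
    (F : Matrix (Fin n) (Fin n) ℂ →ₗ[ℂ] Matrix (Fin m) (Fin m) ℂ)
    (hFcp : IsCP (⇑F))
    (σ : Matrix (Fin n) (Fin n) ℂ) (hσ : σ.PosDef)
    (ρ : Matrix (Fin m) (Fin m) ℂ) (hρ : ρ.PosDef)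
    (hpres : ∀ B : Matrix (Fin n) (Fin n) ℂ, (ρ * F B).trace = (σ * B).trace) :
    ((∃ G : Matrix (Fin m) (Fin m) ℂ →ₗ[ℂ] Matrix (Fin n) (Fin n) ℂ,
        IsCP (⇑G) ∧ G 1 = 1 ∧
        ∀ (A : Matrix (Fin m) (Fin m) ℂ) (B : Matrix (Fin n) (Fin n) ℂ),
          (σ * G A * B).trace = (ρ * A * F B).trace) ↔
      (∀ B : Matrix (Fin n) (Fin n) ℂ, F (σ * B) * ρ = ρ * F (B * σ))) ∧
    (∀ G G' : Matrix (Fin m) (Fin m) ℂ →ₗ[ℂ] Matrix (Fin n) (Fin n) ℂ,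
      (IsCP (⇑G) ∧ G 1 = 1 ∧
        ∀ (A : Matrix (Fin m) (Fin m) ℂ) (B : Matrix (Fin n) (Fin n) ℂ),
          (σ * G A * B).trace = (ρ * A * F B).trace) →
      (IsCP (⇑G') ∧ G' 1 = 1 ∧
        ∀ (A : Matrix (Fin m) (Fin m) ℂ) (B : Matrix (Fin n) (Fin n) ℂ),
          (σ * G' A * B).trace = (ρ * A * F B).trace) →
      G = G') := by
  have hdual : traceDual F ρ = σ := by
    rw [ext_iff_trace_mul_right]
    intro B
    rw [trace_traceDual_mul, hpres]
  refine ⟨⟨fun ⟨G, hG, _, hbayes⟩ => ?_, fun h => ?_⟩, ?_⟩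
  · exact intertwines_of_bayes hFcp.map_conjTranspose hG.map_conjTranspose hσ.1 hρ.1
      ((bayes_condition_iff_mul_eq_traceDual F G σ ρ).1 hbayes)
  · obtain ⟨G, hG, hG1, hbayes⟩ := exists_bayes_of_intertwines hFcp hσ hρ.posSemidef hdual h
    exact ⟨G, hG, hG1, (bayes_condition_iff_mul_eq_traceDual F G σ ρ).2 hbayes⟩
  · rintro G G' ⟨-, -, hbayes⟩ ⟨-, -, hbayes'⟩
    ext1 A
    apply hσ.isUnit.mul_left_cancel
    rw [(bayes_condition_iff_mul_eq_traceDual F G σ ρ).1 hbayes,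
      (bayes_condition_iff_mul_eq_traceDual F G' σ ρ).1 hbayes']

/-- For a state-preserving UCP map `F : M_n(ℂ) → M_m(ℂ)` between positive
definite density matrices `σ` and `ρ`: a UCP Bayesian inverse of `(F, tr(ρ ·))` exists
iff `F(σB)ρ = ρF(Bσ)` for all `B`; moreover any two Bayesian inverses are equal. -/
theorem stmt_8 (n m : ℕ)
    (F : Matrix (Fin n) (Fin n) ℂ →ₗ[ℂ] Matrix (Fin m) (Fin m) ℂ)
    (hFcp : IsCP (⇑F)) (hFunital : F 1 = 1)
    (σ : Matrix (Fin n) (Fin n) ℂ) (hσ : σ.PosDef) (hσtr : σ.trace = 1)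
    (ρ : Matrix (Fin m) (Fin m) ℂ) (hρ : ρ.PosDef) (hρtr : ρ.trace = 1)
    (hpres : ∀ B : Matrix (Fin n) (Fin n) ℂ, (ρ * F B).trace = (σ * B).trace) :
    ((∃ G : Matrix (Fin m) (Fin m) ℂ →ₗ[ℂ] Matrix (Fin n) (Fin n) ℂ,
        IsCP (⇑G) ∧ G 1 = 1 ∧
        ∀ (A : Matrix (Fin m) (Fin m) ℂ) (B : Matrix (Fin n) (Fin n) ℂ),
          (σ * G A * B).trace = (ρ * A * F B).trace) ↔
      (∀ B : Matrix (Fin n) (Fin n) ℂ, F (σ * B) * ρ = ρ * F (B * σ))) ∧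
    (∀ G G' : Matrix (Fin m) (Fin m) ℂ →ₗ[ℂ] Matrix (Fin n) (Fin n) ℂ,
      (IsCP (⇑G) ∧ G 1 = 1 ∧
        ∀ (A : Matrix (Fin m) (Fin m) ℂ) (B : Matrix (Fin n) (Fin n) ℂ),
          (σ * G A * B).trace = (ρ * A * F B).trace) →
      (IsCP (⇑G') ∧ G' 1 = 1 ∧
        ∀ (A : Matrix (Fin m) (Fin m) ℂ) (B : Matrix (Fin n) (Fin n) ℂ),
          (σ * G' A * B).trace = (ρ * A * F B).trace) →
      G = G') :=
  stmt_8_general n m F hFcp σ hσ ρ hρ hpres
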